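/- Let α, β > 0 with α + β < 1. Then for every energy e > 0, every point (x,y) ∈ ℝ², and every direction angle φ, the electromagnetic curvature of the toy model is strictly positive: K_e((x,y), φ) > 0. -/

import Mathlib

/-!
With `S = √(e + αx² + βy²)`, clearing the denominator `2 S⁶` turns `K_e` into
`(1 - α - β) S² + (√2 αx - S sin φ)² + (√2 βy + S cos φ)²`: expanding the squares,
`sin² φ + cos² φ = 1` produces the missing `S²` and the cross terms are the magnetic term.
For `α + β < 1` the first summand is positive and the other two are squares.
-/

/-- Electromagnetic curvature of the planar toy model (potential `V = −αx²−βy²`,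
magnetic field `σ = 2 dx∧dy`) at energy `e`, at the point `(x,y)` in the
unit direction `(cos φ, sin φ)`. -/
noncomputable def emCurv (α β e x y φ : ℝ) : ℝ :=
  (2 - α - β) / (2*(e + α*x^2 + β*y^2)^2)
    + (α^2*x^2 + β^2*y^2) / (e + α*x^2 + β*y^2)^3
    - Real.sqrt 2 * (α*x*Real.sin φ - β*y*Real.cos φ) /
        (e + α*x^2 + β*y^2) ^ ((5:ℝ)/2)

theorem emCurv_eq_sum_sq_div {α β e x y φ : ℝ} (hE : 0 < e + α*x^2 + β*y^2) :
    emCurv α β e x y φ =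
      ((1 - α - β) * √(e + α*x^2 + β*y^2) ^ 2
        + (√2 * α * x - √(e + α*x^2 + β*y^2) * Real.sin φ) ^ 2
        + (√2 * β * y + √(e + α*x^2 + β*y^2) * Real.cos φ) ^ 2)
      / (2 * √(e + α*x^2 + β*y^2) ^ 6) := by
  set S := √(e + α*x^2 + β*y^2)
  have hS : 0 < S := Real.sqrt_pos.mpr hE
  have hS_sq : S ^ 2 = e + α*x^2 + β*y^2 := Real.sq_sqrt hE.le
  have hrpow : (e + α*x^2 + β*y^2) ^ ((5:ℝ)/2) = S ^ 5 := by
    rw [Real.rpow_div_two_eq_sqrt _ hE.le]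
    exact_mod_cast Real.rpow_natCast S 5
  have hsqrt2 : √2 ^ 2 = 2 := Real.sq_sqrt zero_le_two
  unfold emCurv
  rw [hrpow, ← hS_sq]
  field_simp
  linear_combination (-S^2) * Real.sin_sq_add_cos_sq φ + (-(α^2*x^2 + β^2*y^2)) * hsqrt2

/-- If `α + β < 1`, the electromagnetic curvature of the toy model is
everywhere strictly positive, at every energy and in every direction. -/
theorem stmt_13 (α β : ℝ) (hα : 0 < α) (hβ : 0 < β) (h : α + β < 1) :
    ∀ e : ℝ, 0 < e → ∀ x y φ : ℝ, 0 < emCurv α β e x y φ := by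
  intro e he x y φ
  have hE : 0 < e + α*x^2 + β*y^2 := by positivity
  have hS : 0 < √(e + α*x^2 + β*y^2) := Real.sqrt_pos.mpr hE
  have h_main : 0 < (1 - α - β) * √(e + α*x^2 + β*y^2) ^ 2 :=
    mul_pos (by linarith) (by positivity)
  rw [emCurv_eq_sum_sq_div hE]
  positivity
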